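/- arXiv:2012.00347 — 2 statements merged into one kernel-verified Lean document; each statement's English description precedes it below -/
import Mathlib

section
/- Let λ_p > 0 and d₂ > 0 satisfy λ_p d₂ ≥ 1, and set λ₂ = (1 − e^{−2 λ_p d₂})/(2 d₂). Then 2 − (2 − λ₂d₂)²/2 ≥ 2 − (3 + e^{−2})²/8, and moreover 2 − (3 + e^{−2})²/8 ≥ 0.77. -/
/-! With `x = λ₂ d₂ = (1 - e^{-2 λ_p d₂}) / 2`, heavy traffic gives `(1 - e^{-2}) / 2 ≤ x ≤ 1/2`,
and `x ↦ 2 - (2 - x)² / 2` is increasing for `x ≤ 2`, so its value is at least the one at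
`x = (1 - e^{-2}) / 2`, namely `2 - (3 + e^{-2})² / 8`. The numerical bound follows from
`e^{-2} < 0.1354`. -/

open Real

lemma sq_sub_le_sq_sub {a b c : ℝ} (hab : a ≤ b) (hbc : b ≤ c) : (c - b) ^ 2 ≤ (c - a) ^ 2 :=
  pow_le_pow_left₀ (sub_nonneg.mpr hbc) (by linarith) 2

lemma exp_neg_two_lt : exp (-2) < 0.1354 := by
  have h : exp (-2) = exp (-1) ^ 2 := by rw [← exp_nat_mul]; norm_num
  rw [h]
  nlinarith [exp_neg_one_lt_d9, exp_pos (-1)]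

lemma exp_neg_two_mul_le_of_one_le {t : ℝ} (ht : 1 ≤ t) : exp (-(2 * t)) ≤ exp (-2) :=
  exp_le_exp.mpr (by linarith)

theorem heavy_traffic_cumulative_bound_general (lp d₂ : ℝ) (hd : 0 < d₂)
    (hheavy : 1 ≤ lp * d₂) (l2 : ℝ)
    (hl2 : l2 = (1 - Real.exp (-(2 * lp * d₂))) / (2 * d₂)) :
    2 - (2 - l2 * d₂) ^ 2 / 2 ≥ 2 - (3 + Real.exp (-2)) ^ 2 / 8 ∧
    2 - (3 + Real.exp (-2)) ^ 2 / 8 ≥ 0.77 := by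
  have hx : l2 * d₂ = (1 - exp (-(2 * (lp * d₂)))) / 2 := by
    rw [hl2, ← mul_assoc]
    field_simp
  have hlow : (1 - exp (-2)) / 2 ≤ l2 * d₂ := by
    rw [hx]; linarith [exp_neg_two_mul_le_of_one_le hheavy]
  have hhigh : l2 * d₂ ≤ 2 := by
    rw [hx]; linarith [exp_pos (-(2 * (lp * d₂)))]
  have hsq : (2 - l2 * d₂) ^ 2 ≤ ((3 + exp (-2)) / 2) ^ 2 := by
    convert sq_sub_le_sq_sub hlow hhigh using 2; ring
  constructor
  · linarith
  · nlinarith [exp_neg_two_lt, exp_pos (-2)]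

/-- Under heavy traffic `λ_p d₂ ≥ 1`, with `λ₂ = (1 − e^{−2λ_p d₂})/(2d₂)`,
`2 − (2 − λ₂d₂)²/2 ≥ 2 − (3 + e^{−2})²/8` and `2 − (3 + e^{−2})²/8 ≥ 0.77`. -/
theorem heavy_traffic_cumulative_bound (lp d₂ : ℝ) (hlp : 0 < lp) (hd : 0 < d₂)
    (hheavy : 1 ≤ lp * d₂) (l2 : ℝ)
    (hl2 : l2 = (1 - Real.exp (-(2 * lp * d₂))) / (2 * d₂)) :
    2 - (2 - l2 * d₂) ^ 2 / 2 ≥ 2 - (3 + Real.exp (-2)) ^ 2 / 8 ∧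
    2 - (3 + Real.exp (-2)) ^ 2 / 8 ≥ 0.77 :=
  heavy_traffic_cumulative_bound_general lp d₂ hd hheavy l2 hl2
end

section
/- Let λ_p > 0 and d₂ > 0 satisfy λ_p d₂ ≥ 1. Set λ₂ = (1 − e^{−2 λ_p d₂})/(2 d₂) and λ_r = ln( 2 / ((λ₂d₂ − 2)² − 2) ) / (2 d₂). Define f : (0,∞) → ℝ by f(r) = λ₂ for 0 < r ≤ d₂; f(r) = λ₂ (1 − λ₂ (r − d₂)) for d₂ < r ≤ 2d₂; and f(r) = λ_r e^{−λ_r r} for r > 2d₂. Then f is nonnegative on (0,∞) and ∫₀^∞ f(r) dr = 1; that is, f is a probability density function. -/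
/-!
With `a = λ₂ d₂`, the plateau has mass `a`, the linear ramp mass `a - a² / 2`, and the
exponential tail mass `e^{-2 λ_r d₂} = ((a - 2)² - 2) / 2`; these add up to `1` identically
in `a`. Since `λ₂ d₂ = (1 - e^{-2 λ_p d₂}) / 2 ∈ (0, 1/2)`, the ramp stays nonnegative and
`(a - 2)² - 2 ∈ (0, 2)`, so `λ_r > 0` and the tail is an honest exponential density.
-/
open MeasureTheory Real Set intervalIntegral

theorem integral_Ioi_mul_exp_neg_mul {ρ : ℝ} (hρ : 0 < ρ) (a : ℝ) :
    ∫ x in Ioi a, ρ * exp (-(ρ * x)) = exp (-(ρ * a)) := by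
  simp_rw [← neg_mul]
  rw [MeasureTheory.integral_const_mul, integral_exp_mul_Ioi (neg_lt_zero.2 hρ)]
  field_simp

theorem integrableOn_mul_exp_neg_mul {ρ : ℝ} (hρ : 0 < ρ) (a : ℝ) :
    IntegrableOn (fun x => ρ * exp (-(ρ * x))) (Ioi a) := by
  simp_rw [← neg_mul]
  exact (exp_neg_integrableOn_Ioi a hρ).const_mul ρ

theorem integral_mul_one_sub_mul_sub (c d : ℝ) :
    ∫ x in d..2 * d, c * (1 - c * (x - d)) = c * d - (c * d) ^ 2 / 2 := by
  rw [integral_comp_sub_right (fun x => c * (1 - c * x)), intervalIntegral.integral_const_mul,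
    integral_sub intervalIntegrable_const (intervalIntegrable_id.const_mul c),
    intervalIntegral.integral_const_mul]
  simp only [sub_self, two_mul, add_sub_cancel_right, intervalIntegral.integral_const, integral_id,
    smul_eq_mul]
  ring

structure IsPlateauRampExpTail (c d ρ : ℝ) (f : ℝ → ℝ) : Prop where
  plateau : ∀ r, 0 < r → r ≤ d → f r = c
  ramp : ∀ r, d < r → r ≤ 2 * d → f r = c * (1 - c * (r - d))
  tail : ∀ r, 2 * d < r → f r = ρ * exp (-(ρ * r))

namespace IsPlateauRampExpTail

variable {c d ρ : ℝ} {f : ℝ → ℝ}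

theorem nonneg (h : IsPlateauRampExpTail c d ρ f) (hc : 0 ≤ c) (hcd : c * d ≤ 1) (hρ : 0 ≤ ρ) :
    ∀ r ∈ Ioi 0, 0 ≤ f r := by
  intro r (hr : 0 < r)
  rcases le_or_gt r d with hrd | hdr
  · rw [h.plateau r hr hrd]; exact hc
  rcases le_or_gt r (2 * d) with hr2d | h2dr
  · rw [h.ramp r hdr hr2d]
    have : c * (r - d) ≤ c * d := mul_le_mul_of_nonneg_left (by linarith) hc
    exact mul_nonneg hc (by linarith)
  · rw [h.tail r h2dr]; positivity

theorem integral_Ioi_zero (h : IsPlateauRampExpTail c d ρ f) (hd : 0 < d) (hρ : 0 < ρ) :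
    ∫ r in Ioi 0, f r = c * d + (c * d - (c * d) ^ 2 / 2) + exp (-(ρ * (2 * d))) := by
  have hd2d : d ≤ 2 * d := by linarith
  have eq_plateau : EqOn f (fun _ => c) (Ioo 0 d) := fun r hr => h.plateau r hr.1 hr.2.le
  have eq_ramp : EqOn f (fun r => c * (1 - c * (r - d))) (Ioo d (2 * d)) :=
    fun r hr => h.ramp r hr.1 hr.2.le
  have int_plateau : IntervalIntegrable f volume 0 d :=
    (intervalIntegrable_congr_uIoo (uIoo_of_le hd.le ▸ eq_plateau)).2 intervalIntegrable_const
  have int_ramp : IntervalIntegrable f volume d (2 * d) :=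
    (intervalIntegrable_congr_uIoo (uIoo_of_le hd2d ▸ eq_ramp)).2
      (Continuous.intervalIntegrable (by fun_prop) _ _)
  have int_tail : IntegrableOn f (Ioi (2 * d)) :=
    (integrableOn_mul_exp_neg_mul hρ _).congr_fun (fun r hr => (h.tail r hr).symm)
      measurableSet_Ioi
  have int_Ioi_d : IntegrableOn f (Ioi d) :=
    Ioc_union_Ioi_eq_Ioi hd2d ▸ int_ramp.1.union int_tail
  rw [← integral_interval_add_Ioi' int_plateau int_Ioi_d,
    ← integral_interval_add_Ioi' int_ramp int_tail, integral_congr_Ioo_of_le hd.le eq_plateau,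
    integral_congr_Ioo_of_le hd2d eq_ramp, integral_mul_one_sub_mul_sub,
    setIntegral_congr_fun measurableSet_Ioi h.tail, integral_Ioi_mul_exp_neg_mul hρ,
    intervalIntegral.integral_const, sub_zero, smul_eq_mul, mul_comm d]
  ring

end IsPlateauRampExpTail

theorem piecewise_nearest_vehicle_density_is_pdf_general (lp d₂ : ℝ) (hlp : 0 < lp) (hd : 0 < d₂)
    (l2 lr : ℝ)
    (hl2 : l2 = (1 - Real.exp (-(2 * lp * d₂))) / (2 * d₂))
    (hlr : lr = Real.log (2 / ((l2 * d₂ - 2) ^ 2 - 2)) / (2 * d₂))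
    (f : ℝ → ℝ)
    (hf1 : ∀ r : ℝ, 0 < r → r ≤ d₂ → f r = l2)
    (hf2 : ∀ r : ℝ, d₂ < r → r ≤ 2 * d₂ → f r = l2 * (1 - l2 * (r - d₂)))
    (hf3 : ∀ r : ℝ, 2 * d₂ < r → f r = lr * Real.exp (-(lr * r))) :
    (∀ r ∈ Set.Ioi (0:ℝ), 0 ≤ f r) ∧ (∫ r in Set.Ioi (0:ℝ), f r) = 1 := by
  have hf : IsPlateauRampExpTail l2 d₂ lr f := ⟨hf1, hf2, hf3⟩
  have hmass : l2 * d₂ = (1 - exp (-(2 * lp * d₂))) / 2 := by rw [hl2]; field_simp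
  have hexp : exp (-(2 * lp * d₂)) < 1 := exp_lt_one_iff.2 (neg_lt_zero.2 (by positivity))
  obtain ⟨hmass_pos, hmass_lt⟩ : 0 < l2 * d₂ ∧ l2 * d₂ < 1 / 2 := by
    rw [hmass]; constructor <;> linarith [exp_pos (-(2 * lp * d₂))]
  set t := (l2 * d₂ - 2) ^ 2 - 2
  have ht_pos : 0 < t := by nlinarith
  have ht_lt : t < 2 := by nlinarith
  have hlr_pos : 0 < lr := hlr ▸ div_pos (log_pos ((one_lt_div ht_pos).2 ht_lt)) (by positivity)
  have htail : exp (-(lr * (2 * d₂))) = t / 2 := by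
    rw [hlr, div_mul_cancel₀ _ (by positivity), exp_neg, exp_log (by positivity), inv_div]
  refine ⟨hf.nonneg (pos_of_mul_pos_left hmass_pos hd.le).le (by linarith) hlr_pos.le, ?_⟩
  rw [hf.integral_Ioi_zero hd hlr_pos, htail]
  ring

/-- Under heavy traffic `λ_p d₂ ≥ 1`, with `λ₂ = (1 − e^{−2λ_p d₂})/(2d₂)` and
`λ_r = ln(2/((λ₂d₂ − 2)² − 2))/(2d₂)`, the piecewise function
`f(r) = λ₂` on `(0, d₂]`, `f(r) = λ₂(1 − λ₂(r − d₂))` on `(d₂, 2d₂]`,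
`f(r) = λ_r e^{−λ_r r}` on `(2d₂, ∞)` is nonnegative on `(0,∞)` and integrates to `1`;
that is, it is a probability density function. -/
theorem piecewise_nearest_vehicle_density_is_pdf (lp d₂ : ℝ) (hlp : 0 < lp) (hd : 0 < d₂)
    (hheavy : 1 ≤ lp * d₂) (l2 lr : ℝ)
    (hl2 : l2 = (1 - Real.exp (-(2 * lp * d₂))) / (2 * d₂))
    (hlr : lr = Real.log (2 / ((l2 * d₂ - 2) ^ 2 - 2)) / (2 * d₂))
    (f : ℝ → ℝ)
    (hf1 : ∀ r : ℝ, 0 < r → r ≤ d₂ → f r = l2)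
    (hf2 : ∀ r : ℝ, d₂ < r → r ≤ 2 * d₂ → f r = l2 * (1 - l2 * (r - d₂)))
    (hf3 : ∀ r : ℝ, 2 * d₂ < r → f r = lr * Real.exp (-(lr * r))) :
    (∀ r ∈ Set.Ioi (0:ℝ), 0 ≤ f r) ∧ (∫ r in Set.Ioi (0:ℝ), f r) = 1 :=
  piecewise_nearest_vehicle_density_is_pdf_general lp d₂ hlp hd l2 lr hl2 hlr f hf1 hf2 hf3
end
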